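/- Approximate conditional independence is invariant under expectation-equivalence: if U is approximately conditionally independent of V given V' with respect to a nonstandard probability measure ν, and ν ≈ ν', then U is approximately conditionally independent of V given V' with respect to ν'. -/

import Mathlib

/-!
Applied to the simple random variables `p • 1_A` and `q • 1_B`, expectation-equivalence says
`ι₁ p * ν₁ A ≤ ι₁ q * ν₁ B ↔ ι₂ p * ν₂ A ≤ ι₂ q * ν₂ B`. With `p = 1, q = 0, B = univ` this shows
that `ν₁` and `ν₂` have the same null events. With `p = 1, B = D` it shows that for `ν D > 0` the
reals lying above `ν₁ E / ν₁ D` are exactly those lying above `ν₂ E / ν₂ D`; the standard part is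
the infimum of these reals, so conditional probabilities have the same standard part under `ν₁`
and `ν₂`.
-/

open Set

/-- The standard part of an element of an ordered field extension of `ℝ`. -/
noncomputable def stPart {K : Type*} [Field K] [LinearOrder K] [IsStrictOrderedRing K] (ι : ℝ →+* K) (b : K) : ℝ :=
  sInf {a : ℝ | b ≤ ι a}

/-- `U` is approximately conditionally independent of `V` given `V'` w.r.t. `ν`:
if `ν(U ∩ V') ≠ 0` then `st(ν(V | U ∩ V')) = st(ν(V | V'))`. -/
def ApproxCondIndep {W K : Type*} [Field K] [LinearOrder K] [IsStrictOrderedRing K] (ι : ℝ →+* K)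
    (ν : Set W → K) (U V V' : Set W) : Prop :=
  ν (U ∩ V') ≠ 0 →
    stPart ι (ν (V ∩ (U ∩ V')) / ν (U ∩ V')) = stPart ι (ν (V ∩ V') / ν V')

/-- `ν₁ ≈ ν₂`; the sums are the expectations `E_ν X`, `E_ν Y` of random variables with values in `s`. -/
def ExpectationEquiv {W K₁ K₂ : Type*} [Semiring K₁] [PartialOrder K₁] [Semiring K₂]
    [PartialOrder K₂] (F : Set (Set W)) (ι₁ : ℝ →+* K₁) (ν₁ : Set W → K₁) (ι₂ : ℝ →+* K₂)
    (ν₂ : Set W → K₂) : Prop :=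
  ∀ X Y : W → ℝ, (∀ x, X ⁻¹' {x} ∈ F) → (∀ x, Y ⁻¹' {x} ∈ F) →
    ∀ s : Finset ℝ, range X ⊆ ↑s → range Y ⊆ ↑s →
      ((∑ x ∈ s, ι₁ x * ν₁ (X ⁻¹' {x})) ≤ (∑ x ∈ s, ι₁ x * ν₁ (Y ⁻¹' {x})) ↔
       (∑ x ∈ s, ι₂ x * ν₂ (X ⁻¹' {x})) ≤ (∑ x ∈ s, ι₂ x * ν₂ (Y ⁻¹' {x})))

section SetFunction

variable {W K : Type*} {F : Set (Set W)} {ν : Set W → K}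

lemma empty_eq_zero_of_additive [AddCancelMonoid K] (hempty : ∅ ∈ F)
    (hadd : ∀ U ∈ F, ∀ V ∈ F, Disjoint U V → ν (U ∪ V) = ν U + ν V) : ν ∅ = 0 := by
  have h := hadd ∅ hempty ∅ hempty (disjoint_empty ∅)
  rw [empty_union] at h
  exact left_eq_add.mp h

lemma le_of_subset_of_additive [AddCommMonoid K] [PartialOrder K] [IsOrderedAddMonoid K]
    (hcompl : ∀ U ∈ F, Uᶜ ∈ F) (hinter : ∀ U ∈ F, ∀ V ∈ F, U ∩ V ∈ F)
    (hnn : ∀ U ∈ F, 0 ≤ ν U) (hadd : ∀ U ∈ F, ∀ V ∈ F, Disjoint U V → ν (U ∪ V) = ν U + ν V)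
    {A B : Set W} (hA : A ∈ F) (hB : B ∈ F) (hAB : A ⊆ B) : ν A ≤ ν B := by
  have hBA : B \ A ∈ F := hinter B hB Aᶜ (hcompl A hA)
  calc ν A ≤ ν A + ν (B \ A) := le_add_of_nonneg_right (hnn _ hBA)
    _ = ν B := by rw [← hadd A hA _ hBA disjoint_sdiff_right, union_sdiff_cancel hAB]

lemma indicator_const_preimage_singleton_mem [Zero K] (huniv : univ ∈ F)
    (hcompl : ∀ U ∈ F, Uᶜ ∈ F) {A : Set W} (hA : A ∈ F) (p x : K) :
    (A.indicator fun _ => p) ⁻¹' {x} ∈ F := by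
  have hempty : ∅ ∈ F := compl_univ (α := W) ▸ hcompl univ huniv
  obtain h | h | h | h := indicator_const_preimage A {x} p <;> rw [h]
  exacts [huniv, hA, hcompl A hA, hempty]

lemma range_indicator_const_subset (A : Set W) (p : ℝ) :
    range (A.indicator fun _ => p) ⊆ {p, 0} := by
  rintro _ ⟨w, rfl⟩
  by_cases hw : w ∈ A <;> simp [hw]

lemma sum_mul_indicator_const_preimage [Semiring K] (ι : ℝ →+* K) (hempty : ν ∅ = 0)
    (A : Set W) {p : ℝ} {s : Finset ℝ} (hp : p ∈ s) :
    ∑ x ∈ s, ι x * ν ((A.indicator fun _ => p) ⁻¹' {x}) = ι p * ν A := by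
  classical
  rw [Finset.sum_eq_single_of_mem p hp]
  · rcases eq_or_ne p 0 with rfl | hp0
    · simp
    · rw [indicator_const_preimage_eq_union]
      simp [Ne.symm hp0]
  · intro x _ hxp
    rcases eq_or_ne x 0 with rfl | hx0
    · simp
    · rw [indicator_const_preimage_eq_union]
      simp [Ne.symm hxp, Ne.symm hx0, hempty]

end SetFunction

lemma stPart_div_eq_of_forall_le_mul_iff {K₁ K₂ : Type*} [Field K₁] [LinearOrder K₁]
    [IsStrictOrderedRing K₁] [Field K₂] [LinearOrder K₂] [IsStrictOrderedRing K₂]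
    {ι₁ : ℝ →+* K₁} {ι₂ : ℝ →+* K₂} {e₁ d₁ : K₁} {e₂ d₂ : K₂} (hd₁ : 0 < d₁) (hd₂ : 0 < d₂)
    (h : ∀ a : ℝ, e₁ ≤ ι₁ a * d₁ ↔ e₂ ≤ ι₂ a * d₂) :
    stPart ι₁ (e₁ / d₁) = stPart ι₂ (e₂ / d₂) := by
  unfold stPart
  congr 1
  ext a
  exact (div_le_iff₀ hd₁).trans ((h a).trans (div_le_iff₀ hd₂).symm)

namespace ExpectationEquiv

variable {W K₁ K₂ : Type*} {F : Set (Set W)}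

section Semiring

variable [Semiring K₁] [LinearOrder K₁] [Semiring K₂] [LinearOrder K₂]
  {ι₁ : ℝ →+* K₁} {ι₂ : ℝ →+* K₂} {ν₁ : Set W → K₁} {ν₂ : Set W → K₂}

lemma mul_le_mul_iff (hequiv : ExpectationEquiv F ι₁ ν₁ ι₂ ν₂) (huniv : univ ∈ F)
    (hcompl : ∀ U ∈ F, Uᶜ ∈ F) (hν₁ : ν₁ ∅ = 0) (hν₂ : ν₂ ∅ = 0)
    {A B : Set W} (hA : A ∈ F) (hB : B ∈ F) (p q : ℝ) :
    ι₁ p * ν₁ A ≤ ι₁ q * ν₁ B ↔ ι₂ p * ν₂ A ≤ ι₂ q * ν₂ B := by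
  have hp : p ∈ ({p, q, 0} : Finset ℝ) := by simp
  have hq : q ∈ ({p, q, 0} : Finset ℝ) := by simp
  have hrange (C : Set W) (r : ℝ) (hr : r ∈ ({p, q, 0} : Finset ℝ)) :
      range (C.indicator fun _ => r) ⊆ ↑({p, q, 0} : Finset ℝ) :=
    (range_indicator_const_subset C r).trans <| by simpa [insert_subset_iff] using hr
  have h := hequiv _ _ (indicator_const_preimage_singleton_mem huniv hcompl hA p)
    (indicator_const_preimage_singleton_mem huniv hcompl hB q) _ (hrange A p hp) (hrange B q hq)
  rwa [sum_mul_indicator_const_preimage ι₁ hν₁ A hp, sum_mul_indicator_const_preimage ι₁ hν₁ B hq,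
    sum_mul_indicator_const_preimage ι₂ hν₂ A hp, sum_mul_indicator_const_preimage ι₂ hν₂ B hq] at h

lemma pos_iff (hequiv : ExpectationEquiv F ι₁ ν₁ ι₂ ν₂) (huniv : univ ∈ F)
    (hcompl : ∀ U ∈ F, Uᶜ ∈ F) (hν₁ : ν₁ ∅ = 0) (hν₂ : ν₂ ∅ = 0) {A : Set W} (hA : A ∈ F) :
    0 < ν₁ A ↔ 0 < ν₂ A := by
  have h := hequiv.mul_le_mul_iff huniv hcompl hν₁ hν₂ hA huniv 1 0
  simp only [map_one, map_zero, one_mul, zero_mul] at h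
  exact not_le.symm.trans (h.not.trans not_le)

end Semiring

variable [Field K₁] [LinearOrder K₁] [IsStrictOrderedRing K₁]
  [Field K₂] [LinearOrder K₂] [IsStrictOrderedRing K₂]
  {ι₁ : ℝ →+* K₁} {ι₂ : ℝ →+* K₂} {ν₁ : Set W → K₁} {ν₂ : Set W → K₂}

lemma stPart_div_eq (hequiv : ExpectationEquiv F ι₁ ν₁ ι₂ ν₂) (huniv : univ ∈ F)
    (hcompl : ∀ U ∈ F, Uᶜ ∈ F) (hν₁ : ν₁ ∅ = 0) (hν₂ : ν₂ ∅ = 0)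
    {E D : Set W} (hE : E ∈ F) (hD : D ∈ F) (hD₁ : 0 < ν₁ D) :
    stPart ι₁ (ν₁ E / ν₁ D) = stPart ι₂ (ν₂ E / ν₂ D) := by
  refine stPart_div_eq_of_forall_le_mul_iff hD₁
    ((hequiv.pos_iff huniv hcompl hν₁ hν₂ hD).mp hD₁) fun a => ?_
  simpa only [map_one, one_mul] using hequiv.mul_le_mul_iff huniv hcompl hν₁ hν₂ hE hD 1 a

end ExpectationEquiv

theorem stmt17_general {W : Type*} {F : Set (Set W)}
    {K₁ K₂ : Type*} [Field K₁] [LinearOrder K₁] [IsStrictOrderedRing K₁]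
    [Field K₂] [LinearOrder K₂] [IsStrictOrderedRing K₂]
    (ι₁ : ℝ →+* K₁)
    (ι₂ : ℝ →+* K₂)
    (huniv : Set.univ ∈ F) (hcompl : ∀ U ∈ F, Uᶜ ∈ F)
    (hinter : ∀ U ∈ F, ∀ V ∈ F, U ∩ V ∈ F)
    (ν₁ : Set W → K₁) (ν₂ : Set W → K₂)
    (hν₁nn : ∀ U ∈ F, 0 ≤ ν₁ U)
    (hν₁add : ∀ U ∈ F, ∀ V ∈ F, Disjoint U V → ν₁ (U ∪ V) = ν₁ U + ν₁ V)
    (hν₂nn : ∀ U ∈ F, 0 ≤ ν₂ U)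
    (hν₂add : ∀ U ∈ F, ∀ V ∈ F, Disjoint U V → ν₂ (U ∪ V) = ν₂ U + ν₂ V)
    (hequiv : ∀ X Y : W → ℝ, (∀ x, X ⁻¹' {x} ∈ F) → (∀ x, Y ⁻¹' {x} ∈ F) →
      ∀ s : Finset ℝ, Set.range X ⊆ ↑s → Set.range Y ⊆ ↑s →
        ((∑ x ∈ s, ι₁ x * ν₁ (X ⁻¹' {x})) ≤ (∑ x ∈ s, ι₁ x * ν₁ (Y ⁻¹' {x})) ↔
         (∑ x ∈ s, ι₂ x * ν₂ (X ⁻¹' {x})) ≤ (∑ x ∈ s, ι₂ x * ν₂ (Y ⁻¹' {x}))))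
    (U V V' : Set W) (hU : U ∈ F) (hV : V ∈ F) (hV' : V' ∈ F)
    (hind : ApproxCondIndep ι₁ ν₁ U V V') :
    ApproxCondIndep ι₂ ν₂ U V V' := by
  have hequiv : ExpectationEquiv F ι₁ ν₁ ι₂ ν₂ := hequiv
  have hempty : ∅ ∈ F := compl_univ (α := W) ▸ hcompl univ huniv
  have hν₁ := empty_eq_zero_of_additive hempty hν₁add
  have hν₂ := empty_eq_zero_of_additive hempty hν₂add
  have hC : U ∩ V' ∈ F := hinter U hU V' hV'
  intro hC₂
  have hC₁pos : 0 < ν₁ (U ∩ V') :=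
    (hequiv.pos_iff huniv hcompl hν₁ hν₂ hC).mpr ((hν₂nn _ hC).lt_of_ne' hC₂)
  have hV'₁pos : 0 < ν₁ V' :=
    hC₁pos.trans_le (le_of_subset_of_additive hcompl hinter hν₁nn hν₁add hC hV' inter_subset_right)
  rw [← hequiv.stPart_div_eq huniv hcompl hν₁ hν₂ (hinter V hV _ hC) hC hC₁pos,
    ← hequiv.stPart_div_eq huniv hcompl hν₁ hν₂ (hinter V hV V' hV') hV' hV'₁pos]
  exact hind hC₁pos.ne'

/-- Approximate conditional independence is invariant under expectation-equivalence: if `U`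
is approximately conditionally independent of `V` given `V'` with respect to `ν₁`, and
`ν₁ ≈ ν₂`, then the same holds with respect to `ν₂`. -/
theorem stmt17 {W : Type*} {F : Set (Set W)}
    {K₁ K₂ : Type*} [Field K₁] [LinearOrder K₁] [IsStrictOrderedRing K₁]
    [Field K₂] [LinearOrder K₂] [IsStrictOrderedRing K₂]
    (ι₁ : ℝ →+* K₁) (hι₁ : Monotone ι₁)
    (hna₁ : ∃ η : K₁, 0 < η ∧ ∀ r : ℝ, 0 < r → η < ι₁ r)
    (ι₂ : ℝ →+* K₂) (hι₂ : Monotone ι₂)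
    (hna₂ : ∃ η : K₂, 0 < η ∧ ∀ r : ℝ, 0 < r → η < ι₂ r)
    (huniv : Set.univ ∈ F) (hcompl : ∀ U ∈ F, Uᶜ ∈ F)
    (hunion : ∀ U ∈ F, ∀ V ∈ F, U ∪ V ∈ F) (hinter : ∀ U ∈ F, ∀ V ∈ F, U ∩ V ∈ F)
    (ν₁ : Set W → K₁) (ν₂ : Set W → K₂)
    (hν₁nn : ∀ U ∈ F, 0 ≤ ν₁ U) (hν₁tot : ν₁ Set.univ = 1)
    (hν₁add : ∀ U ∈ F, ∀ V ∈ F, Disjoint U V → ν₁ (U ∪ V) = ν₁ U + ν₁ V)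
    (hν₂nn : ∀ U ∈ F, 0 ≤ ν₂ U) (hν₂tot : ν₂ Set.univ = 1)
    (hν₂add : ∀ U ∈ F, ∀ V ∈ F, Disjoint U V → ν₂ (U ∪ V) = ν₂ U + ν₂ V)
    (hequiv : ∀ X Y : W → ℝ, (∀ x, X ⁻¹' {x} ∈ F) → (∀ x, Y ⁻¹' {x} ∈ F) →
      ∀ s : Finset ℝ, Set.range X ⊆ ↑s → Set.range Y ⊆ ↑s →
        ((∑ x ∈ s, ι₁ x * ν₁ (X ⁻¹' {x})) ≤ (∑ x ∈ s, ι₁ x * ν₁ (Y ⁻¹' {x})) ↔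
         (∑ x ∈ s, ι₂ x * ν₂ (X ⁻¹' {x})) ≤ (∑ x ∈ s, ι₂ x * ν₂ (Y ⁻¹' {x}))))
    (U V V' : Set W) (hU : U ∈ F) (hV : V ∈ F) (hV' : V' ∈ F)
    (hind : ApproxCondIndep ι₁ ν₁ U V V') :
    ApproxCondIndep ι₂ ν₂ U V V' :=
  stmt17_general ι₁ ι₂ huniv hcompl hinter ν₁ ν₂ hν₁nn hν₁add hν₂nn hν₂add hequiv U V V' hU hV hV'
    hind
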